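/- Let f(J,z) = (2GM/R³, -GM/R³, -GM/R³ - p²/(2(mR²+I₀+J₃)²)) denote perturbation terms and consider the critical point equations: (A/ε)J̄₁ + (B/ε)(J̄₂+J̄₃) + (1/ε)Σⱼ Cⱼ z̄ⱼ = -2GM/R̄³ + O(ε), (A/ε)J̄₂ + (B/ε)(J̄₁+J̄₃) + (1/ε)Σⱼ Cⱼ z̄ⱼ = GM/R̄³ + O(ε), (A/ε)J̄₃ + (B/ε)(J̄₁+J̄₂) + (1/ε)Σⱼ Cⱼ z̄ⱼ = GM/R̄³ + p²/(2(mR̄²+I₀+J̄₃)²) + O(ε). If A > B, GM/R̄³ > 0, and p ≠ 0, then for all sufficiently small ε > 0 these equations imply J̄₁ < J̄₂ < J̄₃. -/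
import Mathlib


/-- At a critical point of the effective potential, the principal moments of
inertia satisfy `Jb₁ < Jb₂ < Jb₃` for sufficiently small stiffness parameter ε. -/
theorem critical_point_ordering {n : ℕ} (A B : ℝ) (C : Fin n → ℝ)
    (G M m I₀ Rb p K : ℝ)
    (hAB : A > B) (hG : 0 < G * M / Rb ^ 3) (hp : p ≠ 0)
    (hm : 0 < m) (hI₀ : 0 < I₀) (hR : 0 < Rb)
    (Jb : ℝ → Fin 3 → ℝ) (zb : ℝ → Fin n → ℝ) (r₁ r₂ r₃ : ℝ → ℝ)
    (hK : 0 < K)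
    (hJbound : ∀ ε > 0, ∀ i, |Jb ε i| ≤ K * ε)
    (hr₁ : ∀ ε > 0, |r₁ ε| ≤ K * ε)
    (hr₂ : ∀ ε > 0, |r₂ ε| ≤ K * ε)
    (hr₃ : ∀ ε > 0, |r₃ ε| ≤ K * ε)
    (heq₁ : ∀ ε > 0, A / ε * Jb ε 0 + B / ε * (Jb ε 1 + Jb ε 2)
      + (1 / ε) * ∑ j, C j * zb ε j = -(2 * G * M / Rb ^ 3) + r₁ ε)
    (heq₂ : ∀ ε > 0, A / ε * Jb ε 1 + B / ε * (Jb ε 0 + Jb ε 2)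
      + (1 / ε) * ∑ j, C j * zb ε j = G * M / Rb ^ 3 + r₂ ε)
    (heq₃ : ∀ ε > 0, A / ε * Jb ε 2 + B / ε * (Jb ε 0 + Jb ε 1)
      + (1 / ε) * ∑ j, C j * zb ε j
        = G * M / Rb ^ 3 + p ^ 2 / (2 * (m * Rb ^ 2 + I₀ + Jb ε 2) ^ 2) + r₃ ε) :
    ∃ ε₁ > 0, ∀ ε, 0 < ε → ε < ε₁ → Jb ε 0 < Jb ε 1 ∧ Jb ε 1 < Jb ε 2 := by

  have hQ : 0 < m * Rb ^ 2 + I₀ := by positivity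
  set g := G * M / Rb ^ 3 with hgdef
  set Q := m * Rb ^ 2 + I₀ with hQdef
  have hp2 : 0 < p ^ 2 := by positivity
  set c := p ^ 2 / (2 * (2 * Q) ^ 2) with hcdef
  have hc : 0 < c := by rw [hcdef]; positivity
  refine ⟨min (min (g / K) (Q / (2 * K))) (c / (3 * K)), by positivity, ?_⟩
  intro ε hε hεlt
  have hlt := lt_min_iff.mp hεlt
  have hlt' := lt_min_iff.mp hlt.1
  have hKg : K * ε < g := by
    have := (lt_div_iff₀ hK).mp hlt'.1; linarith
  have hKQ : K * ε < Q / 2 := by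
    have := (lt_div_iff₀ (by positivity : (0:ℝ) < 2 * K)).mp hlt'.2; linarith
  have hKc : 3 * (K * ε) < c := by
    have := (lt_div_iff₀ (by positivity : (0:ℝ) < 3 * K)).mp hlt.2; linarith
  have h1 := heq₁ ε hε
  have h2 := heq₂ ε hε
  have h3 := heq₃ ε hε
  have hr1 := abs_le.mp (hr₁ ε hε)
  have hr2 := abs_le.mp (hr₂ ε hε)
  have hr3 := abs_le.mp (hr₃ ε hε)
  have hJ2 := abs_le.mp (hJbound ε hε 2)
  have hεne : ε ≠ 0 := ne_of_gt hε
  have hdiv : 0 < (A - B) / ε := div_pos (sub_pos.mpr hAB) hε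
  have hd1 : (A - B) / ε * (Jb ε 1 - Jb ε 0) = 3 * g + (r₂ ε - r₁ ε) := by
    linear_combination h2 - h1
  have hpos1 : 0 < 3 * g + (r₂ ε - r₁ ε) := by linarith
  have hJ01 : Jb ε 0 < Jb ε 1 := by
    by_contra h
    push_neg at h
    have hle : (A - B) / ε * (Jb ε 1 - Jb ε 0) ≤ 0 :=
      mul_nonpos_of_nonneg_of_nonpos hdiv.le (by linarith)
    linarith [hd1 ▸ hle]
  refine ⟨hJ01, ?_⟩
  have hD : 0 < Q + Jb ε 2 := by linarith
  have hd2 : (A - B) / ε * (Jb ε 2 - Jb ε 1)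
      = p ^ 2 / (2 * (Q + Jb ε 2) ^ 2) + (r₃ ε - r₂ ε) := by
    linear_combination h3 - h2
  have h2Q : Q + Jb ε 2 ≤ 2 * Q := by linarith
  have hsq : (Q + Jb ε 2) ^ 2 ≤ (2 * Q) ^ 2 := pow_le_pow_left₀ hD.le h2Q 2
  have hkey : 2 * (Q + Jb ε 2) ^ 2 ≤ 2 * (2 * Q) ^ 2 := by linarith
  have hcle : c ≤ p ^ 2 / (2 * (Q + Jb ε 2) ^ 2) := by
    rw [hcdef]
    exact div_le_div_of_nonneg_left (by positivity) (by positivity) hkey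
  have hpos2 : 0 < p ^ 2 / (2 * (Q + Jb ε 2) ^ 2) + (r₃ ε - r₂ ε) := by
    linarith
  by_contra h
  push_neg at h
  have hle : (A - B) / ε * (Jb ε 2 - Jb ε 1) ≤ 0 :=
    mul_nonpos_of_nonneg_of_nonpos hdiv.le (by linarith)
  linarith [hd2 ▸ hle]
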